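/- arXiv:math/9811038 — 5 statements merged into one kernel-verified Lean document; each statement's English description precedes it below -/
import Mathlib

section
/- Let M be a model category. Then M is right proper (i.e., the pullback of any weak equivalence along any fibration is again a weak equivalence) if and only if every fibration in M is sharp. -/
open CategoryTheory CategoryTheory.Limits

universe v u

namespace Paper

variable {M : Type u} [Category.{v} M]

/-- A map `f : X ⟶ Y` is *sharp* with respect to a class `W` of weak equivalences if
for every diagram of two composable pullback squares `A → A' → X` over `B → B' → Y`
in which `j : B ⟶ B'` is a weak equivalence, the induced map `i : A ⟶ A'` is a weak
equivalence. -/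
def Sharp (W : MorphismProperty M) {X Y : M} (f : X ⟶ Y) : Prop :=
  ∀ ⦃A A' B B' : M⦄ (i : A ⟶ A') (p : A ⟶ B) (t' : A' ⟶ X) (p' : A' ⟶ B')
    (j : B ⟶ B') (g' : B' ⟶ Y),
    IsPullback t' p' f g' → IsPullback i p p' j → W j → W i

/-- The data and axioms of a (closed) model category structure on a category `M`:
classes of weak equivalences, cofibrations and fibrations, satisfying two-out-of-three,
closure under retracts, the lifting axioms, and the factorization axioms. -/
structure ModelStructure (M : Type u) [Category.{v} M] where
  W : MorphismProperty M
  Cof : MorphismProperty M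
  Fib : MorphismProperty M
  w_id : ∀ X : M, W (𝟙 X)
  w_comp : ∀ {X Y Z : M} (f : X ⟶ Y) (g : Y ⟶ Z), W f → W g → W (f ≫ g)
  w_cancel_left : ∀ {X Y Z : M} (f : X ⟶ Y) (g : Y ⟶ Z), W f → W (f ≫ g) → W g
  w_cancel_right : ∀ {X Y Z : M} (f : X ⟶ Y) (g : Y ⟶ Z), W g → W (f ≫ g) → W f
  w_retract : ∀ {X Y X' Y' : M} (f : X ⟶ Y) (f' : X' ⟶ Y') (s : X ⟶ X') (r : X' ⟶ X)
      (s' : Y ⟶ Y') (r' : Y' ⟶ Y), s ≫ r = 𝟙 X → s' ≫ r' = 𝟙 Y →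
      s ≫ f' = f ≫ s' → f' ≫ r' = r ≫ f → W f' → W f
  cof_retract : ∀ {X Y X' Y' : M} (f : X ⟶ Y) (f' : X' ⟶ Y') (s : X ⟶ X') (r : X' ⟶ X)
      (s' : Y ⟶ Y') (r' : Y' ⟶ Y), s ≫ r = 𝟙 X → s' ≫ r' = 𝟙 Y →
      s ≫ f' = f ≫ s' → f' ≫ r' = r ≫ f → Cof f' → Cof f
  fib_retract : ∀ {X Y X' Y' : M} (f : X ⟶ Y) (f' : X' ⟶ Y') (s : X ⟶ X') (r : X' ⟶ X)
      (s' : Y ⟶ Y') (r' : Y' ⟶ Y), s ≫ r = 𝟙 X → s' ≫ r' = 𝟙 Y →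
      s ≫ f' = f ≫ s' → f' ≫ r' = r ≫ f → Fib f' → Fib f
  lift_cof_w_fib : ∀ {A B X Y : M} (i : A ⟶ B) (p : X ⟶ Y),
      Cof i → W i → Fib p → HasLiftingProperty i p
  lift_cof_fib_w : ∀ {A B X Y : M} (i : A ⟶ B) (p : X ⟶ Y),
      Cof i → Fib p → W p → HasLiftingProperty i p
  fact_triv_cof_fib : ∀ {X Y : M} (f : X ⟶ Y),
      ∃ (Z : M) (i : X ⟶ Z) (p : Z ⟶ Y), Cof i ∧ W i ∧ Fib p ∧ i ≫ p = f
  fact_cof_triv_fib : ∀ {X Y : M} (f : X ⟶ Y),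
      ∃ (Z : M) (i : X ⟶ Z) (p : Z ⟶ Y), Cof i ∧ Fib p ∧ W p ∧ i ≫ p = f

/-- A model structure is *right proper* if the pullback of a weak equivalence along a
fibration is a weak equivalence. -/
def ModelStructure.RightProper (S : ModelStructure M) : Prop :=
  ∀ ⦃X' X Y' Y : M⦄ (i : X' ⟶ X) (g : X' ⟶ Y') (f : X ⟶ Y) (j : Y' ⟶ Y),
    IsPullback i g f j → S.Fib f → S.W j → S.W i

/-- A commutative square with corners `P, X, Y, B` is *homotopy cartesian* (with respect
to weak equivalences `W` and fibrations `F`) if for some factorizations `X ⟶ X' ⟶ B` of `f`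
and `Y ⟶ Y' ⟶ B` of `g` into a weak equivalence followed by a fibration, the induced map
`P ⟶ X' ×_B Y'` is a weak equivalence. -/
def HomotopyCartesian [HasPullbacks M] (W F : MorphismProperty M) {P X Y B : M}
    (h : P ⟶ X) (k : P ⟶ Y) (f : X ⟶ B) (g : Y ⟶ B) : Prop :=
  ∃ (X' Y' : M) (iX : X ⟶ X') (pX : X' ⟶ B) (iY : Y ⟶ Y') (pY : Y' ⟶ B)
    (_ : iX ≫ pX = f) (_ : iY ≫ pY = g)
    (w : (h ≫ iX) ≫ pX = (k ≫ iY) ≫ pY),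
    W iX ∧ F pX ∧ W iY ∧ F pY ∧ W (pullback.lift (h ≫ iX) (k ≫ iY) w)

/-- Lifting against a pullback: if `p'` is a pullback of `f`, any lifting property
against `f` transfers to `p'`. -/
lemma hasLiftingProperty_of_isPullback {M : Type u} [Category.{v} M]
    {A' B' X Y C D : M} (t' : A' ⟶ X) (p' : A' ⟶ B') (f : X ⟶ Y) (g' : B' ⟶ Y)
    (hpb : IsPullback t' p' f g') (i : C ⟶ D) [HasLiftingProperty i f] :
    HasLiftingProperty i p' := by
  constructor
  intro u v sq
  have sq' : CommSq (u ≫ t') i f (v ≫ g') := by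
    constructor
    rw [← Category.assoc, ← sq.w, Category.assoc, Category.assoc, hpb.w]
  refine ⟨⟨⟨hpb.lift sq'.lift v (by rw [sq'.fac_right]), ?_, ?_⟩⟩⟩
  · apply hpb.hom_ext
    · rw [Category.assoc, hpb.lift_fst, sq'.fac_left]
    · rw [Category.assoc, hpb.lift_snd, sq.w]
  · exact hpb.lift_snd _ _ _

/-- Fibrations are stable under pullback in a model structure. -/
lemma ModelStructure.fib_of_isPullback {M : Type u} [Category.{v} M]
    (S : ModelStructure M) {A' B' X Y : M} (t' : A' ⟶ X) (p' : A' ⟶ B')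
    (f : X ⟶ Y) (g' : B' ⟶ Y) (hpb : IsPullback t' p' f g') (hf : S.Fib f) :
    S.Fib p' := by
  -- p' has RLP against trivial cofibrations
  have rlp : ∀ {C D : M} (i : C ⟶ D), S.Cof i → S.W i → HasLiftingProperty i p' := by
    intro C D i hc hw
    have := S.lift_cof_w_fib i f hc hw hf
    exact hasLiftingProperty_of_isPullback t' p' f g' hpb i
  obtain ⟨Z, j, q, hjc, hjw, hqf, hfac⟩ := S.fact_triv_cof_fib p'
  have := rlp j hjc hjw
  have sq : CommSq (𝟙 A') j p' q := ⟨by simpa using hfac.symm⟩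
  exact S.fib_retract p' q j sq.lift (𝟙 B') (𝟙 B') sq.fac_left (Category.id_comp _)
    (by simp [hfac]) (by simp [sq.fac_right]) hqf

/-- A model category is right proper if and only if every fibration is sharp. -/
theorem statement0 [HasFiniteLimits M] [HasFiniteColimits M] (S : ModelStructure M) :
    S.RightProper ↔ ∀ ⦃X Y : M⦄ (f : X ⟶ Y), S.Fib f → Sharp S.W f := by
  constructor
  · intro hrp X Y f hf A A' B B' i p t' p' j g' hpb1 hpb2 hj
    have hp' : S.Fib p' := S.fib_of_isPullback t' p' f g' hpb1 hf
    exact hrp i p p' j hpb2 hp' hj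
  · intro hsharp X' X Y' Y i g f j hpb hf hj
    exact hsharp f hf i g (𝟙 X) f j (𝟙 Y) (IsPullback.of_horiz_isIso ⟨by simp⟩) hpb hj


end Paper
end

section
/- Let M be a model category and consider a commutative square with corners P, X, Y, B, with maps P → X, P → Y, f : X → B, g : Y → B. Suppose f factors as a weak equivalence X → X' followed by a fibration X' → B, and g factors as a weak equivalence Y → Y' followed by a fibration Y' → B, and that the induced map P → X' ×_B Y' is a weak equivalence. Then for any other choice of factorizations of f and g into a weak equivalence followed by a fibration, say X → X'' → B and Y → Y'' → B, the induced map P → X'' ×_B Y'' is also a weak equivalence. -/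
open CategoryTheory CategoryTheory.Limits

universe v u

namespace Paper

variable {M : Type u} [Category.{v} M]

/-! Two factorizations `X ⟶ X' ⟶ B` and `X ⟶ X'' ⟶ B` of `f` have a common refinement
`X ⟶ Z`, obtained by factoring `X ⟶ X' ×_B X''` as a trivial cofibration followed by a
fibration, whose comparison maps `Z ⟶ X'` and `Z ⟶ X''` are trivial fibrations. Doing this
for `f` and `g`, both induced maps out of `P` factor through the same map
`P ⟶ Z_X ×_B Z_Y`, followed by a map of pullbacks induced by trivial fibrations; such a map is
a base change of trivial fibrations, hence a weak equivalence, and two-out-of-three concludes. -/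

lemma pullback_lift_comp_map [HasPullbacks M] {P X₁ X₂ Y₁ Y₂ B B' : M} {f₁ : X₁ ⟶ B}
    {f₂ : X₂ ⟶ B} {g₁ : Y₁ ⟶ B'} {g₂ : Y₂ ⟶ B'} (a : P ⟶ X₁) (b : P ⟶ X₂)
    (w : a ≫ f₁ = b ≫ f₂) (i₁ : X₁ ⟶ Y₁) (i₂ : X₂ ⟶ Y₂) (i₃ : B ⟶ B')
    (e₁ : f₁ ≫ i₃ = i₁ ≫ g₁) (e₂ : f₂ ≫ i₃ = i₂ ≫ g₂) :
    pullback.lift a b w ≫ pullback.map f₁ f₂ g₁ g₂ i₁ i₂ i₃ e₁ e₂ =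
      pullback.lift (a ≫ i₁) (b ≫ i₂)
        (by simp only [Category.assoc, ← e₁, ← e₂, reassoc_of% w]) := by
  ext <;> simp [pullback.lift_fst, pullback.lift_snd, pullback.lift_fst_assoc,
    pullback.lift_snd_assoc]

instance MorphismProperty.IsStableUnderRetracts.inf {C : Type*} [Category C]
    (P Q : MorphismProperty C) [P.IsStableUnderRetracts] [Q.IsStableUnderRetracts] :
    (P ⊓ Q).IsStableUnderRetracts where
  of_retract h hg := ⟨P.of_retract h hg.1, Q.of_retract h hg.2⟩

namespace ModelStructure

variable (S : ModelStructure M)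

abbrev TrivFib : MorphismProperty M := S.Fib ⊓ S.W

instance : S.W.IsStableUnderRetracts where
  of_retract h hg := S.w_retract _ _ h.i.left h.r.left h.i.right h.r.right
    h.retract_left h.retract_right h.i_w h.r_w.symm hg

instance : S.Fib.IsStableUnderRetracts where
  of_retract h hg := S.fib_retract _ _ h.i.left h.r.left h.i.right h.r.right
    h.retract_left h.retract_right h.i_w h.r_w.symm hg

instance : MorphismProperty.HasFactorization (S.Cof ⊓ S.W) S.Fib where
  nonempty_mapFactorizationData f := by
    obtain ⟨Z, i, p, hic, hiw, hp, fac⟩ := S.fact_triv_cof_fib f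
    exact ⟨{ Z, i, p, fac, hi := ⟨hic, hiw⟩, hp }⟩

instance : MorphismProperty.HasFactorization S.Cof S.TrivFib where
  nonempty_mapFactorizationData f := by
    obtain ⟨Z, i, p, hi, hpf, hpw, fac⟩ := S.fact_cof_triv_fib f
    exact ⟨{ Z, i, p, fac, hi, hp := ⟨hpf, hpw⟩ }⟩

lemma rlp_cof_inf_w : (S.Cof ⊓ S.W).rlp = S.Fib :=
  MorphismProperty.rlp_eq_of_le_rlp_of_hasFactorization_of_isStableUnderRetracts
    fun _ _ p hp _ _ i hi ↦ S.lift_cof_w_fib i p hi.1 hi.2 hp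

lemma rlp_cof : S.Cof.rlp = S.TrivFib :=
  MorphismProperty.rlp_eq_of_le_rlp_of_hasFactorization_of_isStableUnderRetracts
    fun _ _ p hp _ _ i hi ↦ S.lift_cof_fib_w i p hi hp.1 hp.2

instance : S.Fib.IsStableUnderBaseChange := S.rlp_cof_inf_w ▸ inferInstance

instance : S.Fib.IsStableUnderComposition := S.rlp_cof_inf_w ▸ inferInstance

instance : S.TrivFib.IsStableUnderBaseChange := S.rlp_cof ▸ inferInstance

instance : S.TrivFib.IsStableUnderComposition := S.rlp_cof ▸ inferInstance

variable [HasPullbacks M]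

lemma exists_trivFib_refinement {X B X₁ X₂ : M} {i₁ : X ⟶ X₁} {p₁ : X₁ ⟶ B} {i₂ : X ⟶ X₂}
    {p₂ : X₂ ⟶ B} (hi₁ : S.W i₁) (hp₁ : S.Fib p₁) (hi₂ : S.W i₂) (hp₂ : S.Fib p₂)
    (fac : i₁ ≫ p₁ = i₂ ≫ p₂) :
    ∃ (Z : M) (j : X ⟶ Z) (q₁ : Z ⟶ X₁) (q₂ : Z ⟶ X₂), j ≫ q₁ = i₁ ∧ j ≫ q₂ = i₂ ∧
      q₁ ≫ p₁ = q₂ ≫ p₂ ∧ S.TrivFib q₁ ∧ S.TrivFib q₂ := by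
  obtain ⟨Z, j, q, -, hj, hq, hjq⟩ := S.fact_triv_cof_fib (pullback.lift i₁ i₂ fac)
  have hjq₁ : j ≫ q ≫ pullback.fst p₁ p₂ = i₁ := by rw [reassoc_of% hjq, pullback.lift_fst]
  have hjq₂ : j ≫ q ≫ pullback.snd p₁ p₂ = i₂ := by rw [reassoc_of% hjq, pullback.lift_snd]
  refine ⟨Z, j, q ≫ pullback.fst p₁ p₂, q ≫ pullback.snd p₁ p₂, hjq₁, hjq₂,
    by simp [pullback.condition], ⟨?_, ?_⟩, ⟨?_, ?_⟩⟩
  · exact S.Fib.comp_mem _ _ hq (S.Fib.pullback_fst _ _ hp₂)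
  · exact S.w_cancel_left _ _ hj (hjq₁ ▸ hi₁)
  · exact S.Fib.comp_mem _ _ hq (S.Fib.pullback_snd _ _ hp₁)
  · exact S.w_cancel_left _ _ hj (hjq₂ ▸ hi₂)

lemma w_pullback_map {X₁ X₂ Y₁ Y₂ B : M} {f₁ : X₁ ⟶ B} {f₂ : X₂ ⟶ B} {p₁ : Y₁ ⟶ B}
    {p₂ : Y₂ ⟶ B} {q₁ : X₁ ⟶ Y₁} {q₂ : X₂ ⟶ Y₂} (hq₁ : S.TrivFib q₁)
    (hq₂ : S.TrivFib q₂) (e₁ : f₁ ≫ 𝟙 B = q₁ ≫ p₁) (e₂ : f₂ ≫ 𝟙 B = q₂ ≫ p₂) :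
    S.W (pullback.map f₁ f₂ p₁ p₂ q₁ q₂ (𝟙 B) e₁ e₂) :=
  (MorphismProperty.pullbackMap hq₁ hq₂ ((Category.comp_id _).symm.trans e₁)
    ((Category.comp_id _).symm.trans e₂)).2

end ModelStructure

theorem statement1_general [HasFiniteLimits M] (S : ModelStructure M)
    {P X Y B X' Y' X'' Y'' : M}
    (h : P ⟶ X) (k : P ⟶ Y) (f : X ⟶ B) (g : Y ⟶ B)
    (iX : X ⟶ X') (pX : X' ⟶ B) (iY : Y ⟶ Y') (pY : Y' ⟶ B)
    (hX : iX ≫ pX = f) (hY : iY ≫ pY = g)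
    (hiX : S.W iX) (hpX : S.Fib pX) (hiY : S.W iY) (hpY : S.Fib pY)
    (w : (h ≫ iX) ≫ pX = (k ≫ iY) ≫ pY)
    (hwe : S.W (pullback.lift (h ≫ iX) (k ≫ iY) w))
    (iX' : X ⟶ X'') (pX' : X'' ⟶ B) (iY' : Y ⟶ Y'') (pY' : Y'' ⟶ B)
    (hX' : iX' ≫ pX' = f) (hY' : iY' ≫ pY' = g)
    (hiX' : S.W iX') (hpX' : S.Fib pX') (hiY' : S.W iY') (hpY' : S.Fib pY')
    (w' : (h ≫ iX') ≫ pX' = (k ≫ iY') ≫ pY') :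
    S.W (pullback.lift (h ≫ iX') (k ≫ iY') w') := by
  obtain ⟨ZX, jX, qX, qX', rfl, rfl, hpqX, hqX, hqX'⟩ :=
    S.exists_trivFib_refinement hiX hpX hiX' hpX' (hX.trans hX'.symm)
  obtain ⟨ZY, jY, qY, qY', rfl, rfl, hpqY, hqY, hqY'⟩ :=
    S.exists_trivFib_refinement hiY hpY hiY' hpY' (hY.trans hY'.symm)
  let ℓ : P ⟶ pullback (qX ≫ pX) (qY ≫ pY) :=
    pullback.lift (h ≫ jX) (k ≫ jY) (by simpa using w)
  have hℓ : S.W ℓ := S.w_cancel_right _ _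
    (S.w_pullback_map (p₁ := pX) (p₂ := pY) hqX hqY (by simp) (by simp))
    (by simpa only [ℓ, pullback_lift_comp_map, Category.assoc])
  have hcomp := S.w_comp _ _ hℓ
    (S.w_pullback_map (p₁ := pX') (p₂ := pY') hqX' hqY' (by simp [hpqX]) (by simp [hpqY]))
  simpa only [ℓ, pullback_lift_comp_map, Category.assoc] using hcomp

/-- If for one pair of (weak equivalence, fibration)-factorizations of the two legs of a
commutative square the induced map to the pullback is a weak equivalence, then the same
holds for any other such pair of factorizations. -/
theorem statement1 [HasFiniteLimits M] [HasFiniteColimits M] (S : ModelStructure M)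
    {P X Y B X' Y' X'' Y'' : M}
    (h : P ⟶ X) (k : P ⟶ Y) (f : X ⟶ B) (g : Y ⟶ B)
    (iX : X ⟶ X') (pX : X' ⟶ B) (iY : Y ⟶ Y') (pY : Y' ⟶ B)
    (hX : iX ≫ pX = f) (hY : iY ≫ pY = g)
    (hiX : S.W iX) (hpX : S.Fib pX) (hiY : S.W iY) (hpY : S.Fib pY)
    (w : (h ≫ iX) ≫ pX = (k ≫ iY) ≫ pY)
    (hwe : S.W (pullback.lift (h ≫ iX) (k ≫ iY) w))
    (iX' : X ⟶ X'') (pX' : X'' ⟶ B) (iY' : Y ⟶ Y'') (pY' : Y'' ⟶ B)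
    (hX' : iX' ≫ pX' = f) (hY' : iY' ≫ pY' = g)
    (hiX' : S.W iX') (hpX' : S.Fib pX') (hiY' : S.W iY') (hpY' : S.Fib pY')
    (w' : (h ≫ iX') ≫ pX' = (k ≫ iY') ≫ pY') :
    S.W (pullback.lift (h ≫ iX') (k ≫ iY') w') :=
  statement1_general S h k f g iX pX iY pY hX hY hiX hpX hiY hpY w hwe iX' pX' iY' pY' hX' hY' hiX'
    hpX' hiY' hpY' w'

end Paper
end

section
/- Let M be a right proper model category and g : Y → B a morphism in M. Then g is sharp if and only if for every morphism f : X → B, the pullback square with corners X ×_B Y, X, Y, B is a homotopy cartesian square. -/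
/-! Fix a factorization `g = u ≫ v` into a weak equivalence followed by a fibration. By right
properness, base change along a fibration preserves weak equivalences, so the comparison map
`P ⟶ X ×_B Ŷ` of a homotopy cartesian pullback square `P = X ×_B Y` is a weak equivalence. If `g` is sharp and `X ⟶ X' ⟶ B` factors `f`, this comparison factors as
`P ⟶ X' ×_B Y`, the base change along `g` of the weak equivalence `X ⟶ X'`, followed by the base
change of `u` along a fibration. Conversely, in a diagram of two pullback squares over a weak
equivalence `j : B₀ ⟶ B₀'`, the comparison maps of `A` and `A'` differ by the base change of `j`
along `v`, so `A ⟶ A'` is a weak equivalence by two-out-of-three. -/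

open CategoryTheory CategoryTheory.Limits

universe v u

namespace Paper

variable {M : Type u} [Category.{v} M]

namespace ModelStructure

variable (S : ModelStructure M)

lemma fib_of_retractArrow {X Y Z T : M} {f : X ⟶ Y} {g : Z ⟶ T} (h : RetractArrow f g)
    (hg : S.Fib g) : S.Fib f :=
  S.fib_retract f g h.i.left h.r.left h.i.right h.r.right h.retract_left h.retract_right
    h.i_w h.r_w.symm hg

lemma fib_eq_rlp : S.Fib = (S.Cof ⊓ S.W).rlp := by
  refine le_antisymm (fun _ _ p hp _ _ i hi ↦ S.lift_cof_w_fib i p hi.1 hi.2 hp) ?_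
  intro _ _ p hp
  obtain ⟨_, i, q, hi, hWi, hq, hfac⟩ := S.fact_triv_cof_fib p
  have := hp i ⟨hi, hWi⟩
  exact S.fib_of_retractArrow (RetractArrow.ofRightLiftingProperty hfac) hq

lemma fib_of_isPullback_s3 {E' E B' B : M} {k : E' ⟶ E} {p' : E' ⟶ B'} {p : E ⟶ B}
    {q : B' ⟶ B} (hpb : IsPullback k p' p q) (hp : S.Fib p) : S.Fib p' := by
  rw [fib_eq_rlp] at hp ⊢
  exact MorphismProperty.of_isPullback hpb hp

end ModelStructure

section Pullbacks

variable [HasPullbacks M] {P X Y B : M} {h : P ⟶ X} {k : P ⟶ Y} {f : X ⟶ B} {g : Y ⟶ B}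

lemma isPullback_lift_comp_left (hpb : IsPullback h k f g) {X' : M} {f' : X' ⟶ B}
    (w : X ⟶ X') (hw : w ≫ f' = f) :
    IsPullback (pullback.lift (h ≫ w) k (by rw [Category.assoc, hw, hpb.w]))
      h (pullback.fst f' g) w := by
  refine IsPullback.of_right ?_ (pullback.lift_fst _ _ _) (IsPullback.of_hasPullback f' g).flip
  rw [pullback.lift_snd, hw]
  exact hpb.flip

lemma isPullback_lift_comp_right (hpb : IsPullback h k f g) {Y' : M} {g' : Y' ⟶ B}
    (w : Y ⟶ Y') (hw : w ≫ g' = g) :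
    IsPullback (pullback.lift h (k ≫ w) (by rw [Category.assoc, hw, hpb.w]))
      k (pullback.snd f g') w := by
  refine IsPullback.of_right ?_ (pullback.lift_snd _ _ _) (IsPullback.of_hasPullback f g')
  rw [pullback.lift_fst, hw]
  exact hpb

lemma Sharp.w_lift_comp_left {W : MorphismProperty M} (hg : Sharp W g)
    (hpb : IsPullback h k f g) {X' : M} {f' : X' ⟶ B} (w : X ⟶ X') (hw : w ≫ f' = f)
    (hW : W w) : W (pullback.lift (h ≫ w) k (by rw [Category.assoc, hw, hpb.w])) :=
  hg _ h (pullback.snd f' g) (pullback.fst f' g) w f' (IsPullback.of_hasPullback f' g).flip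
    (isPullback_lift_comp_left hpb w hw) hW

namespace ModelStructure.RightProper

variable {S : ModelStructure M}

lemma w_lift_fst_comp (hS : S.RightProper) {X' : M} {f' : X' ⟶ B} (w : X ⟶ X')
    (hw : w ≫ f' = f) (hg : S.Fib g) (hW : S.W w) :
    S.W (pullback.lift (pullback.fst f g ≫ w) (pullback.snd f g)
      (by rw [Category.assoc, hw, pullback.condition])) :=
  hS _ _ _ w (isPullback_lift_comp_left (IsPullback.of_hasPullback f g) w hw)
    (S.fib_of_isPullback_s3 (IsPullback.of_hasPullback f' g).flip hg) hW

lemma w_lift_snd_comp (hS : S.RightProper) {Y' : M} {g' : Y' ⟶ B} (w : Y ⟶ Y')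
    (hw : w ≫ g' = g) (hf : S.Fib f) (hW : S.W w) :
    S.W (pullback.lift (pullback.fst f g) (pullback.snd f g ≫ w)
      (by rw [Category.assoc, hw, pullback.condition])) :=
  hS _ _ _ w (isPullback_lift_comp_right (IsPullback.of_hasPullback f g) w hw)
    (S.fib_of_isPullback_s3 (IsPullback.of_hasPullback f g') hf) hW

lemma w_lift_of_homotopyCartesian (hS : S.RightProper) {Ŷ : M} {u : Y ⟶ Ŷ} {v : Ŷ ⟶ B}
    (hu : S.W u) (hv : S.Fib v) (huv : u ≫ v = g) (hpb : IsPullback h k f g)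
    (hc : HomotopyCartesian S.W S.Fib h k f g) :
    S.W (pullback.lift h (k ≫ u) (by rw [Category.assoc, huv, hpb.w]) : P ⟶ pullback f v) := by
  obtain ⟨X', Y', iX, pX, iY, pY, rfl, rfl, hw, hiX, hpX, hiY, -, hW⟩ := hc
  have hm : S.W (pullback.lift (h ≫ iX) k (by rw [Category.assoc, hpb.w]) :
      P ⟶ pullback pX (iY ≫ pY)) := by
    refine S.w_cancel_right _ _ (hS.w_lift_snd_comp iY rfl hpX hiY) ?_
    convert hW using 1
    ext <;> simp only [Category.assoc, pullback.lift_fst, pullback.lift_snd,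
      pullback.lift_snd_assoc]
  refine S.w_cancel_right _ _ (hS.w_lift_fst_comp iX rfl hv hiX) ?_
  convert S.w_comp _ _ hm (hS.w_lift_snd_comp u huv hpX hu) using 1
  ext <;> simp only [Category.assoc, pullback.lift_fst, pullback.lift_snd,
    pullback.lift_fst_assoc, pullback.lift_snd_assoc]

lemma homotopyCartesian_of_sharp (hS : S.RightProper) (hg : Sharp S.W g)
    (hpb : IsPullback h k f g) : HomotopyCartesian S.W S.Fib h k f g := by
  obtain ⟨X', iX, pX, -, hiX, hpX, rfl⟩ := S.fact_triv_cof_fib f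
  obtain ⟨Ŷ, u, v, -, hu, hv, rfl⟩ := S.fact_triv_cof_fib g
  refine ⟨X', Ŷ, iX, pX, u, v, rfl, rfl, by simpa only [Category.assoc] using hpb.w,
    hiX, hpX, hu, hv, ?_⟩
  convert S.w_comp _ _ (hg.w_lift_comp_left hpb iX rfl hiX) (hS.w_lift_snd_comp u rfl hpX hu)
    using 1
  ext <;> simp only [Category.assoc, pullback.lift_fst, pullback.lift_snd,
    pullback.lift_snd_assoc]

lemma sharp_of_forall_homotopyCartesian (hS : S.RightProper)
    (H : ∀ ⦃P X : M⦄ (h : P ⟶ X) (k : P ⟶ Y) (f : X ⟶ B),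
      IsPullback h k f g → HomotopyCartesian S.W S.Fib h k f g) : Sharp S.W g := by
  intro A A' B₀ B₀' i p t' p' j g' hpb' hpb hj
  obtain ⟨Ŷ, u, v, -, hu, hv, huv⟩ := S.fact_triv_cof_fib g
  have sq' : IsPullback p' t' g' g := hpb'.flip
  have sq : IsPullback p (i ≫ t') (j ≫ g') g := (hpb.paste_horiz hpb').flip
  refine S.w_cancel_right i _ (hS.w_lift_of_homotopyCartesian hu hv huv sq' (H _ _ _ sq')) ?_
  convert S.w_comp _ _ (hS.w_lift_of_homotopyCartesian hu hv huv sq (H _ _ _ sq))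
    (hS.w_lift_fst_comp j rfl hv hj) using 1
  ext <;> simp only [Category.assoc, pullback.lift_fst, pullback.lift_snd,
    pullback.lift_fst_assoc, hpb.w]

end ModelStructure.RightProper

end Pullbacks

theorem statement3_general [HasFiniteLimits M] (S : ModelStructure M)
    (hS : S.RightProper) {Y B : M} (g : Y ⟶ B) :
    Sharp S.W g ↔
      ∀ ⦃P X : M⦄ (h : P ⟶ X) (k : P ⟶ Y) (f : X ⟶ B),
        IsPullback h k f g → HomotopyCartesian S.W S.Fib h k f g :=
  ⟨fun hg _ _ _ _ _ hpb ↦ hS.homotopyCartesian_of_sharp hg hpb,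
    hS.sharp_of_forall_homotopyCartesian⟩

/-- In a right proper model category, a map `g : Y ⟶ B` is sharp if and only if every
pullback square along `g` is homotopy cartesian. -/
theorem statement3 [HasFiniteLimits M] [HasFiniteColimits M] (S : ModelStructure M)
    (hS : S.RightProper) {Y B : M} (g : Y ⟶ B) :
    Sharp S.W g ↔
      ∀ ⦃P X : M⦄ (h : P ⟶ X) (k : P ⟶ Y) (f : X ⟶ B),
        IsPullback h k f g → HomotopyCartesian S.W S.Fib h k f g :=
  statement3_general S hS g

end Paper
end

section
/- Let B be a complete Boolean algebra and X : Bᵒᵖ → Set a presheaf on B. Then X is a sheaf — i.e., for every b ∈ B and every family (b_i)_{i ∈ I} with ⨆_{i} b_i = b, the restriction map X(b) → ∏_i X(b_i) is injective and its image is exactly the set of families (x_i) such that for all i, j the restrictions of x_i and x_j to X(b_i ⊓ b_j) agree — if and only if for every b ∈ B and every decomposition (b_i)_{i ∈ I} of b, the restriction map X(b) → ∏_i X(b_i) is bijective. -/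
/-!
Every cover can be refined to a decomposition with the same supremum: well-order the index type
and replace `c i` by `c i \ ⨆ j < i, c j`. Hence, if restriction to decompositions is bijective,
sections agreeing on the members of a cover agree on the members of a refining decomposition and
are therefore equal, and a compatible family glues along the refining decomposition; the glued
section restricts to the given one on each `c i` because both agree on the cover
`(c i ⊓ d j)_j` of `c i`. Conversely the empty cover forces `X(⊥)` to have at most one element,
so every family over a decomposition is compatible.
-/

open CategoryTheory Opposite
open scoped Function

universe u

section Disjointed

variable {α ι : Type*} [CompleteBooleanAlgebra α]

theorem exists_disjointed_le_of_wellFoundedLT [LinearOrder ι] [WellFoundedLT ι] (f : ι → α) :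
    ∃ g, g ≤ f ∧ ⨆ i, g i = ⨆ i, f i ∧ Pairwise (Disjoint on g) := by
  refine ⟨fun i => f i \ ⨆ j < i, f j, fun i => sdiff_le, ?_, ?_⟩
  · refine le_antisymm (iSup_mono fun i => sdiff_le) (iSup_le fun i => ?_)
    induction i using WellFoundedLT.induction with
    | ind i IH =>
      calc f i ≤ (f i \ ⨆ j < i, f j) ⊔ ⨆ j < i, f j := le_sdiff_sup
        _ ≤ ⨆ k, f k \ ⨆ j < k, f j :=
          sup_le (le_iSup (fun k => f k \ ⨆ j < k, f j) i) (iSup₂_le IH)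
  · refine (pairwise_disjoint_on _).2 fun j i hji => ?_
    have hfj : f j ≤ ⨆ k < i, f k := le_iSup₂_of_le j hji le_rfl
    exact (disjoint_sdiff_self_left.mono_right (sdiff_le.trans hfj)).symm

theorem exists_disjointed_le (f : ι → α) :
    ∃ g, g ≤ f ∧ ⨆ i, g i = ⨆ i, f i ∧ Pairwise (Disjoint on g) := by
  let _ : LinearOrder ι := WellOrderingRel.isWellOrder.linearOrder
  have : WellFoundedLT ι := ⟨WellOrderingRel.isWellOrder.wf⟩
  exact exists_disjointed_le_of_wellFoundedLT f

end Disjointed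

namespace Paper

variable {B : Type u} [CompleteBooleanAlgebra B]

def res (X : Bᵒᵖ ⥤ Type u) {b b' : B} (h : b' ≤ b) : X.obj (op b) → X.obj (op b') :=
  X.map (homOfLE h).op

@[simp]
theorem res_res (X : Bᵒᵖ ⥤ Type u) {a b c : B} (hab : a ≤ b) (hbc : b ≤ c)
    (x : X.obj (op c)) : res X hab (res X hbc x) = res X (hab.trans hbc) x := by
  simp only [res, ← Functor.map_comp_apply]
  rfl

def IsCoverSheaf (X : Bᵒᵖ ⥤ Type u) : Prop :=
  ∀ (ι : Type u) (b : B) (c : ι → B) (hc : (⨆ i, c i) = b),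
    Function.Injective (fun (x : X.obj (op b)) (i : ι) => res X ((le_iSup c i).trans hc.le) x) ∧
    ∀ (x : ∀ i, X.obj (op (c i))),
      (∀ i j, res X (inf_le_left : c i ⊓ c j ≤ c i) (x i) =
          res X (inf_le_right : c i ⊓ c j ≤ c j) (x j)) →
      ∃ y : X.obj (op b), ∀ i, res X ((le_iSup c i).trans hc.le) y = x i

def IsDecompositionSheaf (X : Bᵒᵖ ⥤ Type u) : Prop :=
  ∀ (ι : Type u) (b : B) (c : ι → B) (hc : (⨆ i, c i) = b),
    (∀ i j, i ≠ j → c i ⊓ c j = ⊥) →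
    Function.Bijective (fun (x : X.obj (op b)) (i : ι) => res X ((le_iSup c i).trans hc.le) x)

variable {X : Bᵒᵖ ⥤ Type u}

theorem IsCoverSheaf.subsingleton_bot (H : IsCoverSheaf X) : Subsingleton (X.obj (op ⊥)) :=
  ⟨fun _ _ => (H PEmpty ⊥ PEmpty.elim (by simp)).1 (funext fun i => nomatch i)⟩

theorem IsCoverSheaf.isDecompositionSheaf (H : IsCoverSheaf X) : IsDecompositionSheaf X := by
  intro ι b c hc hdisj
  refine ⟨(H ι b c hc).1, fun x => ?_⟩
  have hcompat : ∀ i j, res X (inf_le_left : c i ⊓ c j ≤ c i) (x i) =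
      res X (inf_le_right : c i ⊓ c j ≤ c j) (x j) := by
    intro i j
    rcases eq_or_ne i j with rfl | hij
    · rfl
    · have := H.subsingleton_bot
      rw [← hdisj i j hij] at this
      exact Subsingleton.elim _ _
  obtain ⟨y, hy⟩ := (H ι b c hc).2 x hcompat
  exact ⟨y, funext hy⟩

theorem IsDecompositionSheaf.eq_of_res_eq (H : IsDecompositionSheaf X) {ι : Type u} {b : B}
    (c : ι → B) (hc : (⨆ i, c i) = b) {x y : X.obj (op b)}
    (hxy : ∀ i, res X ((le_iSup c i).trans hc.le) x = res X ((le_iSup c i).trans hc.le) y) :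
    x = y := by
  obtain ⟨d, hdc, hd, hdisj⟩ := exists_disjointed_le c
  refine (H ι b d (hd.trans hc) fun i j hij => disjoint_iff.mp (hdisj hij)).1 (funext fun i => ?_)
  simpa using congrArg (res X (hdc i)) (hxy i)

theorem IsDecompositionSheaf.isCoverSheaf (H : IsDecompositionSheaf X) : IsCoverSheaf X := by
  intro ι b c hc
  refine ⟨fun x y hxy => H.eq_of_res_eq c hc (congrFun hxy), fun x hcompat => ?_⟩
  obtain ⟨d, hdc, hd, hdisj⟩ := exists_disjointed_le c
  have hdb : (⨆ i, d i) = b := hd.trans hc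
  obtain ⟨y, hy⟩ := (H ι b d hdb fun i j hij => disjoint_iff.mp (hdisj hij)).2
    fun i => res X (hdc i) (x i)
  have hyd (j : ι) : res X ((le_iSup d j).trans hdb.le) y = res X (hdc j) (x j) := congrFun hy j
  refine ⟨y, fun i => ?_⟩
  have hcover : (⨆ j, c i ⊓ d j) = c i := by
    rw [← inf_iSup_eq, hdb, inf_eq_left]
    exact (le_iSup c i).trans hc.le
  refine H.eq_of_res_eq (fun j => c i ⊓ d j) hcover fun j => ?_
  have hdj : c i ⊓ d j ≤ c i ⊓ c j := inf_le_inf_left _ (hdc j)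
  calc res X _ (res X _ y)
      = res X inf_le_right (res X ((le_iSup d j).trans hdb.le) y) := by simp
    _ = res X hdj (res X inf_le_right (x j)) := by rw [hyd j]; simp
    _ = res X hdj (res X inf_le_left (x i)) := by rw [hcompat i j]
    _ = res X _ (x i) := by simp

theorem isCoverSheaf_iff_isDecompositionSheaf :
    IsCoverSheaf X ↔ IsDecompositionSheaf X :=
  ⟨IsCoverSheaf.isDecompositionSheaf, IsDecompositionSheaf.isCoverSheaf⟩

/-- A presheaf on a complete Boolean algebra `B` is a sheaf (for every cover
`b = ⨆ i, b i` the restriction map to the product is injective with image exactly the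
compatible families) if and only if for every *decomposition* of every `b ∈ B` (a cover
by pairwise disjoint elements) the restriction map to the product is bijective. -/
theorem statement14 (X : Bᵒᵖ ⥤ Type u) :
    (∀ (ι : Type u) (b : B) (c : ι → B) (hc : (⨆ i, c i) = b),
        Function.Injective
          (fun (x : X.obj (op b)) (i : ι) => res X ((le_iSup c i).trans hc.le) x) ∧
        ∀ (x : ∀ i, X.obj (op (c i))),
          (∀ i j, res X (inf_le_left : c i ⊓ c j ≤ c i) (x i) =
              res X (inf_le_right : c i ⊓ c j ≤ c j) (x j)) →
          ∃ y : X.obj (op b), ∀ i, res X ((le_iSup c i).trans hc.le) y = x i)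
    ↔
    (∀ (ι : Type u) (b : B) (c : ι → B) (hc : (⨆ i, c i) = b),
        (∀ i j, i ≠ j → c i ⊓ c j = ⊥) →
        Function.Bijective
          (fun (x : X.obj (op b)) (i : ι) => res X ((le_iSup c i).trans hc.le) x)) :=
  isCoverSheaf_iff_isDecompositionSheaf

end Paper
end

section
/- Let S = {1, …, n} be a finite set with n ≥ 1, let S' = {1, …, n−1}, and let X be a functor from the poset 𝒫̄(S) of proper subsets of S to simplicial sets. Define the functor X' on 𝒫̄(S') by X'(T) = X(T ∪ {n}), and let X|_{S'} denote the restriction of X to 𝒫̄(S'). Then there is a natural pushout square in sSet with top map colim_{𝒫̄(S')} X|_{S'} → colim_{𝒫̄(S')} X' (induced by the maps X(T) → X(T ∪ {n})), left map colim_{𝒫̄(S')} X|_{S'} → X(S'), and pushout corner colim_{𝒫̄(S)} X. Moreover, if X is a cofibrant functor, then both vertical maps X(S') → colim_{𝒫̄(S)} X and colim_{𝒫̄(S')} X' → colim_{𝒫̄(S)} X are monomorphisms. -/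
open CategoryTheory CategoryTheory.Limits Simplicial

namespace Paper

/-- The poset of proper subsets of a finite type `α` (i.e. of the finite set `S = α`),
viewed as a category. -/
abbrev PropSubsets (α : Type) [Fintype α] := {T : Finset α // T ≠ Finset.univ}

/-- The poset of proper subsets of a finite set `T`, viewed as a category. -/
abbrev Below {α : Type} (T : Finset α) := {U : Finset α // U ⊂ T}

variable {α : Type} [Fintype α] [DecidableEq α]

/-- The inclusion of the poset of proper subsets of `T` into the poset of all
subsets of `α`. -/
def belowIncl (T : Finset α) : Below T ⥤ Finset α :=
  Monotone.functor (f := fun U => U.1) (fun _ _ h => h)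

/-- The inclusion of the poset of proper subsets of `T.1` into the poset of proper
subsets of the finite set `α`, for `T` itself a proper subset. -/
def belowInclP (T : PropSubsets α) : Below T.1 ⥤ PropSubsets α :=
  Monotone.functor
    (f := fun U => ⟨U.1, fun h => U.2.not_subset (le_of_le_of_eq T.1.subset_univ h.symm)⟩)
    (fun _ _ h => h)

/-- The canonical map `colim_{𝒫̄(T)} X ⟶ X(T)` for a functor `X` on the poset of all
subsets of `α`. -/
noncomputable def canonicalDesc (X : Finset α ⥤ SSet) (T : Finset α) :
    colimit (belowIncl T ⋙ X) ⟶ X.obj T :=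
  colimit.desc (belowIncl T ⋙ X)
    { pt := X.obj T
      ι :=
        { app := fun (U : Below T) => X.map (homOfLE U.2.subset)
          naturality := fun U V g => by
            dsimp
            rw [Category.comp_id, ← X.map_comp]
            congr 1 } }

/-- A functor on the poset of all subsets of `α` is *cofibrant* if for each subset `T`
the canonical map `colim_{𝒫̄(T)} X ⟶ X(T)` is a monomorphism. -/
def CofibrantFull (X : Finset α ⥤ SSet) : Prop :=
  ∀ T : Finset α, Mono (canonicalDesc X T)

/-- The canonical map `colim_{𝒫̄(T)} X ⟶ X(T)` for a functor `X` defined on the poset of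
proper subsets of `α`, where `T` is a proper subset. -/
noncomputable def canonicalDescP (X : PropSubsets α ⥤ SSet) (T : PropSubsets α) :
    colimit (belowInclP T ⋙ X) ⟶ X.obj T :=
  colimit.desc (belowInclP T ⋙ X)
    { pt := X.obj T
      ι :=
        { app := fun (U : Below T.1) =>
            X.map (homOfLE (show (belowInclP T).obj U ≤ T from U.2.subset))
          naturality := fun U V g => by
            dsimp
            rw [Category.comp_id, ← X.map_comp]
            congr 1 } }

/-- A functor on the poset of proper subsets of `α` is *cofibrant* if for each proper
subset `T` the canonical map `colim_{𝒫̄(T)} X ⟶ X(T)` is a monomorphism. -/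
def CofibrantProp (X : PropSubsets α ⥤ SSet) : Prop :=
  ∀ T : PropSubsets α, Mono (canonicalDescP X T)

/-- For `S = Fin (n+1)` (a finite set with at least one element), the set
`S' = S \ {last}`, viewed as a proper subset of `S`. -/
def lastErase (n : ℕ) : PropSubsets (Fin (n + 1)) :=
  ⟨Finset.univ.erase (Fin.last n), by
    intro h
    exact Finset.notMem_erase (Fin.last n) Finset.univ
      (by rw [h]; exact Finset.mem_univ _)⟩

/-- The monotone map `T ↦ T ∪ {last}` from proper subsets of `S'` to proper subsets
of `S`. -/
def addLast (n : ℕ) : Below (lastErase n).1 ⥤ PropSubsets (Fin (n + 1)) :=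
  Monotone.functor
    (f := fun U => ⟨insert (Fin.last n) U.1, by
      obtain ⟨x, hxS, hxU⟩ := Finset.exists_of_ssubset U.2
      intro h
      have hx : x ∈ insert (Fin.last n) U.1 := by rw [h]; exact Finset.mem_univ x
      rcases Finset.mem_insert.mp hx with h1 | h2
      · exact (Finset.mem_erase.mp hxS).1 h1
      · exact hxU h2⟩)
    (fun U V h => Finset.insert_subset_insert _ h)

/-- The natural transformation `X|_{S'} ⟶ X'`, with components `X(T) ⟶ X(T ∪ {last})`. -/
def restrToAddLast (n : ℕ) (X : PropSubsets (Fin (n + 1)) ⥤ SSet) :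
    belowInclP (lastErase n) ⋙ X ⟶ addLast n ⋙ X where
  app U := X.map (homOfLE
    (show (belowInclP (lastErase n)).obj U ≤ (addLast n).obj U from
      Finset.subset_insert _ _))
  naturality U V g := by
    dsimp
    rw [← X.map_comp, ← X.map_comp]
    congr 1

/-!
The proper subsets of `S` avoiding `n` are the subsets of `S'`, with top element `S'`; those
containing `n` form a copy of `𝒫̄(S')` via `T ↦ T ∪ {n}`. A cocone on `X` is therefore a cocone on
`X'` together with a map out of `X(S')`, the two agreeing on `colim X|_{S'}`; this is the pushout
property.

The monomorphisms are checked levelwise, in sets. Cofibrancy at `T` says that elements over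
subsets of `T` that agree in `X(T)` are already identified in `colim_{𝒫̄(T)} X`; by well-founded
induction on `T` they are then images of a single element over a common smaller subset. So the
zigzags defining `colim X` collapse and each `X(T)` injects into it. The map
`colim X' → colim X` is a pushout of the monomorphism `colim X|_{S'} → X(S')`, and pushouts
preserve monomorphisms in the adhesive category `sSet`.
-/

universe u

section Amalgamation

variable {α : Type} [Fintype α] (F : PropSubsets α ⥤ Type u)

lemma map_homOfLE_self {T : PropSubsets α} (h : T ≤ T) (x : F.obj T) :
    F.map (homOfLE h) x = x :=
  Functor.map_id_apply F T x

lemma map_homOfLE_map_homOfLE {U V W : PropSubsets α} (h₁ : U ≤ V) (h₂ : V ≤ W)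
    (x : F.obj U) :
    F.map (homOfLE h₂) (F.map (homOfLE h₁) x) = F.map (homOfLE (h₁.trans h₂)) x :=
  (Functor.map_comp_apply F _ _ x).symm

def HasCommonPreimage {T T' : PropSubsets α} (x : F.obj T) (x' : F.obj T') : Prop :=
  ∃ (V : PropSubsets α) (h : V ≤ T) (h' : V ≤ T') (v : F.obj V),
    F.map (homOfLE h) v = x ∧ F.map (homOfLE h') v = x'

def AmalgamatesAt (T : PropSubsets α) : Prop :=
  ∀ ⦃W W' : PropSubsets α⦄ (hW : W ≤ T) (hW' : W' ≤ T) (w : F.obj W) (w' : F.obj W'),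
    F.map (homOfLE hW) w = F.map (homOfLE hW') w' → HasCommonPreimage F w w'

/-- Elementwise form of the injectivity of `colim_{𝒫̄(T)} F ⟶ F(T)`. -/
def LatchingInjective (T : PropSubsets α) : Prop :=
  ∀ (U U' : Below T.1) (u : F.obj ((belowInclP T).obj U)) (u' : F.obj ((belowInclP T).obj U')),
    F.map (homOfLE (show (belowInclP T).obj U ≤ T from U.2.subset)) u =
      F.map (homOfLE (show (belowInclP T).obj U' ≤ T from U'.2.subset)) u' →
    Relation.EqvGen (belowInclP T ⋙ F).ColimitTypeRel ⟨U, u⟩ ⟨U', u'⟩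

variable {F}

lemma hasCommonPreimage_refl {T : PropSubsets α} (x : F.obj T) : HasCommonPreimage F x x :=
  ⟨T, le_rfl, le_rfl, x, map_homOfLE_self F _ _, map_homOfLE_self F _ _⟩

lemma HasCommonPreimage.symm {T T' : PropSubsets α} {x : F.obj T} {x' : F.obj T'}
    (h : HasCommonPreimage F x x') : HasCommonPreimage F x' x :=
  let ⟨V, h, h', v, e, e'⟩ := h
  ⟨V, h', h, v, e', e⟩

lemma HasCommonPreimage.trans {T T' T'' : PropSubsets α} {x : F.obj T} {x' : F.obj T'}
    {x'' : F.obj T''} (h₁ : HasCommonPreimage F x x') (h₂ : HasCommonPreimage F x' x'')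
    (hT' : AmalgamatesAt F T') : HasCommonPreimage F x x'' := by
  obtain ⟨V, hV, hV', v, rfl, ev⟩ := h₁
  obtain ⟨V', hV'', hV''', v', ev', rfl⟩ := h₂
  obtain ⟨W, hW, hW', w, rfl, rfl⟩ := hT' hV' hV'' v v' (ev.trans ev'.symm)
  exact ⟨W, hW.trans hV, hW'.trans hV''', w, (map_homOfLE_map_homOfLE F _ _ _).symm,
    (map_homOfLE_map_homOfLE F _ _ _).symm⟩

lemma hasCommonPreimage_of_eqvGen {J : Type*} [Category J] (G : J ⥤ PropSubsets α)
    (hG : ∀ j, AmalgamatesAt F (G.obj j)) {a b : Σ j, (G ⋙ F).obj j}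
    (h : Relation.EqvGen (G ⋙ F).ColimitTypeRel a b) :
    HasCommonPreimage F (T := G.obj a.1) a.2 (T' := G.obj b.1) b.2 := by
  induction h with
  | rel a b hab =>
    obtain ⟨f, hf⟩ := hab
    exact ⟨G.obj a.1, le_rfl, leOfHom (G.map f), a.2, map_homOfLE_self F _ _, hf.symm⟩
  | refl a => exact hasCommonPreimage_refl _
  | symm a b _ ih => exact ih.symm
  | trans a b c _ _ ihab ihbc => exact ihab.trans ihbc (hG b.1)

lemma amalgamatesAt_of_latchingInjective (hF : ∀ T, LatchingInjective F T) (T : PropSubsets α) :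
    AmalgamatesAt F T := by
  induction T using WellFoundedLT.induction with
  | _ T ih =>
  intro W W' hW hW' w w' h
  rcases hW.eq_or_lt with rfl | hWT
  · exact ⟨W', hW', le_rfl, w', by rw [← h, map_homOfLE_self], map_homOfLE_self F _ _⟩
  rcases hW'.eq_or_lt with rfl | hW'T
  · exact ⟨W, le_rfl, hW, w, map_homOfLE_self F _ _, by rw [h, map_homOfLE_self]⟩
  exact hasCommonPreimage_of_eqvGen (belowInclP T) (fun U => ih _ U.2)
    (hF T ⟨W.1, hWT⟩ ⟨W'.1, hW'T⟩ w w' h)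

lemma eq_of_eqvGen_colimitTypeRel (hF : ∀ T, LatchingInjective F T) {T : PropSubsets α}
    {y y' : F.obj T} (h : Relation.EqvGen F.ColimitTypeRel ⟨T, y⟩ ⟨T, y'⟩) : y = y' := by
  obtain ⟨V, _, _, v, hy, hy'⟩ :=
    hasCommonPreimage_of_eqvGen (𝟭 _) (amalgamatesAt_of_latchingInjective hF) h
  exact hy.symm.trans hy'

end Amalgamation

lemma eqvGen_of_colimit_ι_app_eq {J : Type} [SmallCategory J] (X : J ⥤ SSet)
    (k : SimplexCategoryᵒᵖ) {j j' : J} {x : (X.obj j).obj k} {x' : (X.obj j').obj k}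
    (h : (colimit.ι X j).app k x = (colimit.ι X j').app k x') :
    Relation.EqvGen (X ⋙ (evaluation _ _).obj k).ColimitTypeRel ⟨j, x⟩ ⟨j', x'⟩ := by
  apply Types.colimit_eq
  simpa only [← colimitObjIsoColimitCompEvaluation_ι_app_hom, types_comp_apply]
    using congrArg (colimitObjIsoColimitCompEvaluation X k).hom h

section Cofibrant

variable {α : Type} [Fintype α]

lemma latchingInjective_of_mono (X : PropSubsets α ⥤ SSet) (T : PropSubsets α)
    [Mono (canonicalDescP X T)] (k : SimplexCategoryᵒᵖ) :
    LatchingInjective (X ⋙ (evaluation _ _).obj k) T := by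
  intro U U' u u' h
  refine eqvGen_of_colimit_ι_app_eq (belowInclP T ⋙ X) k ?_
  apply (mono_iff_injective ((canonicalDescP X T).app k)).1 inferInstance
  rw [← types_comp_apply ((colimit.ι (belowInclP T ⋙ X) U).app k),
    ← types_comp_apply ((colimit.ι (belowInclP T ⋙ X) U').app k), ← NatTrans.comp_app,
    ← NatTrans.comp_app, canonicalDescP, colimit.ι_desc, colimit.ι_desc]
  exact h

lemma mono_colimit_ι_of_cofibrantProp (X : PropSubsets α ⥤ SSet) (hX : CofibrantProp X)
    (T : PropSubsets α) : Mono (colimit.ι X T) := by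
  refine (NatTrans.mono_iff_mono_app _).2 fun k => (mono_iff_injective _).2 fun y y' h => ?_
  exact eq_of_eqvGen_colimitTypeRel (fun T => have := hX T; latchingInjective_of_mono X T k)
    (eqvGen_of_colimit_ι_app_eq X k h)

end Cofibrant

section Pushout

variable (n : ℕ)

def eraseLast (T : PropSubsets (Fin (n + 1))) (h : Fin.last n ∈ T.1) : Below (lastErase n).1 :=
  ⟨T.1.erase (Fin.last n), by
    refine (Finset.erase_subset_erase _ T.1.subset_univ).ssubset_of_ne fun he => T.2 ?_
    rw [← Finset.insert_erase h, he, Finset.insert_erase (Finset.mem_univ _)]⟩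

lemma addLast_obj_eraseLast (T : PropSubsets (Fin (n + 1))) (h : Fin.last n ∈ T.1) :
    (addLast n).obj (eraseLast n T h) = T :=
  Subtype.ext (Finset.insert_erase h)

lemma le_of_le_addLast_obj {T : PropSubsets (Fin (n + 1))} (h : Fin.last n ∉ T.1)
    {U : Below (lastErase n).1} (hTU : T ≤ (addLast n).obj U) :
    T ≤ (belowInclP (lastErase n)).obj U := fun _ hx =>
  (Finset.mem_insert.1 (hTU hx)).resolve_left fun hx' => h (hx' ▸ hx)

lemma le_lastErase_of_notMem {T : PropSubsets (Fin (n + 1))} (h : Fin.last n ∉ T.1) :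
    T ≤ lastErase n :=
  Finset.subset_erase.2 ⟨T.1.subset_univ, h⟩

variable {n} {X : PropSubsets (Fin (n + 1)) ⥤ SSet}
  (s : PushoutCocone (colimMap (restrToAddLast n X)) (canonicalDescP X (lastErase n)))

noncomputable def gluedApp (T : PropSubsets (Fin (n + 1))) : X.obj T ⟶ s.pt :=
  if h : Fin.last n ∈ T.1 then
    X.map (homOfLE (addLast_obj_eraseLast n T h).ge) ≫
      colimit.ι (addLast n ⋙ X) (eraseLast n T h) ≫ s.inl
  else
    X.map (homOfLE (le_lastErase_of_notMem n h)) ≫ s.inr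

lemma gluedApp_of_notMem {T : PropSubsets (Fin (n + 1))} (h : Fin.last n ∉ T.1) :
    gluedApp s T = X.map (homOfLE (le_lastErase_of_notMem n h)) ≫ s.inr :=
  dif_neg h

lemma map_ι_inl_eq_map_inr (U : Below (lastErase n).1) :
    X.map (homOfLE (show (belowInclP (lastErase n)).obj U ≤ (addLast n).obj U from
      Finset.subset_insert _ _)) ≫ colimit.ι (addLast n ⋙ X) U ≫ s.inl =
    X.map (homOfLE (show (belowInclP (lastErase n)).obj U ≤ lastErase n from U.2.subset)) ≫
      s.inr := by
  simpa [canonicalDescP, restrToAddLast] using colimit.ι _ U ≫= s.condition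

lemma gluedApp_eq_of_le_addLast {T : PropSubsets (Fin (n + 1))} {U : Below (lastErase n).1}
    (hTU : T ≤ (addLast n).obj U) :
    gluedApp s T = X.map (homOfLE hTU) ≫ colimit.ι (addLast n ⋙ X) U ≫ s.inl := by
  unfold gluedApp
  split_ifs with h
  · have hE : eraseLast n T h ≤ U := Finset.subset_insert_iff.1 hTU
    rw [← colimit.w (addLast n ⋙ X) (homOfLE hE), Functor.comp_map, Category.assoc,
      ← X.map_comp_assoc]
    rfl
  · rw [← homOfLE_comp (le_of_le_addLast_obj n h hTU)
      (show (belowInclP (lastErase n)).obj U ≤ (addLast n).obj U from Finset.subset_insert _ _),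
      X.map_comp_assoc, map_ι_inl_eq_map_inr, ← X.map_comp_assoc]
    rfl

noncomputable def gluedCocone : Cocone X where
  pt := s.pt
  ι :=
    { app := gluedApp s
      naturality := fun T T' f => by
        simp only [Functor.const_obj_map]
        by_cases h' : Fin.last n ∈ T'.1
        · rw [gluedApp_eq_of_le_addLast s (addLast_obj_eraseLast n T' h').ge, ← X.map_comp_assoc]
          exact (gluedApp_eq_of_le_addLast s _).symm
        · have h : Fin.last n ∉ T.1 := fun hT => h' (leOfHom f hT)
          rw [gluedApp_of_notMem s h', gluedApp_of_notMem s h, ← X.map_comp_assoc]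
          rfl }

variable (n X)

lemma colimMap_restrToAddLast_comp_pre :
    colimMap (restrToAddLast n X) ≫ colimit.pre X (addLast n) =
      canonicalDescP X (lastErase n) ≫ colimit.ι X (lastErase n) := by
  refine colimit.hom_ext fun U => ?_
  simp [canonicalDescP, restrToAddLast]

theorem isPushout_colimit :
    IsPushout (colimMap (restrToAddLast n X)) (canonicalDescP X (lastErase n))
      (colimit.pre X (addLast n)) (colimit.ι X (lastErase n)) := by
  refine IsPushout.of_isColimit (PushoutCocone.IsColimit.mk
    (colimMap_restrToAddLast_comp_pre n X) (fun s => colimit.desc X (gluedCocone s))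
    (fun s => ?_) (fun s => ?_) (fun s m hl hr => ?_))
  · refine colimit.hom_ext fun U => ?_
    simp [gluedCocone, gluedApp_eq_of_le_addLast s (le_refl ((addLast n).obj U))]
  · simp [gluedCocone, gluedApp_of_notMem s (T := lastErase n) (Finset.notMem_erase _ _)]
  · refine colimit.hom_ext fun T => ?_
    by_cases h : Fin.last n ∈ T.1
    · simp [gluedCocone, gluedApp_eq_of_le_addLast s (addLast_obj_eraseLast n T h).ge, ← hl]
    · simp [gluedCocone, gluedApp_of_notMem s h, ← hr]

end Pushout

/-- For a functor `X` on the poset of proper subsets of `S = {1, …, n}` (realized as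
`Fin (n+1)`), with `S' = S \ {n}`, the square

colim_{𝒫̄(S')} X|_{S'} ⟶ colim_{𝒫̄(S')} X'
        |                        |
      X(S')          ⟶    colim_{𝒫̄(S)} X

is a pushout square; moreover, if `X` is a cofibrant functor, then both vertical maps
into `colim_{𝒫̄(S)} X` are monomorphisms. -/
theorem statement15 (n : ℕ) (X : PropSubsets (Fin (n + 1)) ⥤ SSet) :
    IsPushout (colimMap (restrToAddLast n X)) (canonicalDescP X (lastErase n))
      (colimit.pre X (addLast n)) (colimit.ι X (lastErase n)) ∧
    (CofibrantProp X →
      Mono (colimit.ι X (lastErase n)) ∧ Mono (colimit.pre X (addLast n))) := by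
  have hpush := isPushout_colimit n X
  refine ⟨hpush, fun hX => ⟨mono_colimit_ι_of_cofibrantProp X hX _, ?_⟩⟩
  have := hX (lastErase n)
  exact Adhesive.mono_of_isPushout_of_mono_right hpush

end Paper
end
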